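/- arXiv:2506.19710 — 2 statements merged into one kernel-verified Lean document; each statement's English description precedes it below -/
import Mathlib

section
/- For every odd integer q and every positive integer m, the rational number ((2m^2+m+1)q^3 - (m+3)q)/(48m) multiplied by ã_m is an integer, where ã_m = 8m if m = 2^ν > 1, ã_m = 3m if m = 3^ν, and ã_m = m if m = p^ν with p > 3 prime; moreover for m = 1 the quantity ((2m^2+m+1)q^3-(m+3)q)/48m = (4q^3-4q)/48 = (q^3-q)/12 is an integer. -/
private lemma aux24 (q : ℤ) (hq : Odd q) : ∃ a : ℤ, q ^ 3 - q = 24 * a := by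
  obtain ⟨k, rfl⟩ := hq
  have h6 : (6 : ℤ) ∣ 2 * k ^ 3 + 3 * k ^ 2 + k := by
    have : ∀ x : ZMod 6, 2 * x ^ 3 + 3 * x ^ 2 + x = 0 := by decide
    have h := (ZMod.intCast_zmod_eq_zero_iff_dvd (2 * k ^ 3 + 3 * k ^ 2 + k) 6).mp
      (by push_cast; exact this k)
    exact h
  obtain ⟨a, ha⟩ := h6
  exact ⟨a, by linear_combination 4 * ha⟩

private lemma aux8 (m : ℤ) (hm : Odd m) : (8 : ℤ) ∣ m ^ 2 - 1 := by
  obtain ⟨t, rfl⟩ := hm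
  rcases Int.even_mul_succ_self t with ⟨u, hu⟩
  exact ⟨u, by linear_combination 4 * hu⟩

private lemma aux3 (m : ℤ) (hm : ¬ (3 : ℤ) ∣ m) : (3 : ℤ) ∣ m ^ 2 - 1 := by
  have hne : (m : ZMod 3) ≠ 0 := by
    intro hc
    exact hm ((ZMod.intCast_zmod_eq_zero_iff_dvd m 3).mp hc)
  have : ∀ x : ZMod 3, x ≠ 0 → x ^ 2 - 1 = 0 := by decide
  exact (ZMod.intCast_zmod_eq_zero_iff_dvd (m ^ 2 - 1) 3).mp (by push_cast; exact this _ hne)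

/-- For every odd integer q and each (prime-primary or m = 1) case with the
    corresponding ã_m, the first anomaly index
    ã_m·((2m²+m+1)q³ - (m+3)q)/(48m) is an integer. -/
theorem stmt_13 (m am : ℕ) (q : ℤ) (hq : Odd q) (hm : 0 < m)
    (h : (m = 1 ∧ am = 1) ∨
         (∃ ν : ℕ, 1 ≤ ν ∧ m = 2 ^ ν ∧ am = 8 * m) ∨
         (∃ ν : ℕ, 1 ≤ ν ∧ m = 3 ^ ν ∧ am = 3 * m) ∨
         (∃ p ν : ℕ, p.Prime ∧ 3 < p ∧ 1 ≤ ν ∧ m = p ^ ν ∧ am = m)) :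
    ∃ z : ℤ,
      (am : ℚ) * ((2 * (m : ℚ) ^ 2 + m + 1) * (q : ℚ) ^ 3 - ((m : ℚ) + 3) * q)
          / (48 * m) = (z : ℚ) := by
  obtain ⟨a, ha⟩ := aux24 q hq
  suffices hs : ∃ z : ℤ,
      (am : ℤ) * ((2 * (m : ℤ) ^ 2 + m + 1) * q ^ 3 - ((m : ℤ) + 3) * q)
        = 48 * (m : ℤ) * z by
    obtain ⟨z, hz⟩ := hs
    refine ⟨z, ?_⟩
    have hm0 : (48 : ℚ) * m ≠ 0 := by positivity
    rw [div_eq_iff hm0]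
    have hcast := congrArg (fun x : ℤ => (x : ℚ)) hz
    push_cast at hcast
    linear_combination hcast
  rcases h with ⟨hm1, ham⟩ | ⟨ν, hν, hm2, ham⟩ | ⟨ν, hν, hm3, ham⟩ | ⟨p, ν, hp, hp3, hν, hmp, ham⟩
  · subst hm1; subst ham
    exact ⟨2 * a, by push_cast; linear_combination 4 * ha⟩
  · -- m = 2^ν, am = 8m : need 3 ∤ m
    have h3m : ¬ (3 : ℤ) ∣ (m : ℤ) := by
      intro hc
      rw [hm2] at hc
      have : (3 : ℤ) ∣ (2 : ℤ) ^ ν := by exact_mod_cast hc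
      have h2 : (3 : ℤ) ∣ 2 := Int.prime_three.dvd_of_dvd_pow this
      norm_num at h2
    obtain ⟨c, hc⟩ := aux3 (m : ℤ) h3m
    refine ⟨4 * a * (2 * (m : ℤ) ^ 2 + m + 1) + c * q, ?_⟩
    subst ham
    push_cast
    linear_combination 8 * (m : ℤ) * (2 * (m : ℤ) ^ 2 + (m : ℤ) + 1) * ha
      + 16 * (m : ℤ) * q * hc
  · -- m = 3^ν, am = 3m : m odd
    have hodd : Odd (m : ℤ) := by
      rw [Int.odd_coe_nat, hm3]
      exact Odd.pow (by decide)
    obtain ⟨d, hd⟩ := aux8 (m : ℤ) hodd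
    obtain ⟨t, ht⟩ := hodd
    refine ⟨3 * a * ((m : ℤ) ^ 2 + t + 1) + d * q, ?_⟩
    subst ham
    push_cast
    linear_combination 3 * (m : ℤ) * (2 * (m : ℤ) ^ 2 + (m : ℤ) + 1) * ha
      + 6 * (m : ℤ) * q * hd + 72 * (m : ℤ) * a * ht
  · -- m = p^ν, p > 3 prime, am = m
    have hodd : Odd (m : ℤ) := by
      rw [Int.odd_coe_nat, hmp]
      exact Odd.pow (hp.odd_of_ne_two (by omega))
    have h3m : ¬ (3 : ℤ) ∣ (m : ℤ) := by
      intro hc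
      have h3n : (3 : ℕ) ∣ m := by exact_mod_cast hc
      rw [hmp] at h3n
      have := (Nat.prime_three.dvd_of_dvd_pow h3n)
      have := (Nat.prime_dvd_prime_iff_eq Nat.prime_three hp).mp this
      omega
    obtain ⟨d, hd⟩ := aux8 (m : ℤ) hodd
    obtain ⟨c, hc⟩ := aux3 (m : ℤ) h3m
    have h24 : (24 : ℤ) ∣ (m : ℤ) ^ 2 - 1 := by omega
    obtain ⟨e, he⟩ := h24
    obtain ⟨t, ht⟩ := hodd
    refine ⟨a * ((m : ℤ) ^ 2 + t + 1) + e * q, ?_⟩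
    rw [ham]
    linear_combination (m : ℤ) * (2 * (m : ℤ) ^ 2 + (m : ℤ) + 1) * ha
      + 2 * (m : ℤ) * q * he + 24 * (m : ℤ) * a * ht
end

section
/- Let m be a prime power as above with b̃_m defined correspondingly. Then tilde{ν}_2'(m,3) = 6·b̃_m·(m+1)·gcd(m+1,2)/m is a unit modulo b̃_m. -/
/-! Write `m = c · b̃_m` with `c = 2, 3, 1` in the three cases. Then the index is `k (m + 1)` with
`c k = 6 gcd(m + 1, 2)`, i.e. `k = 3, 4, 12`, so modulo `b̃_m` it is congruent to `k`, and `k` is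
coprime to the prime power `b̃_m`. -/

lemma gcd_succ_two_of_even {m : ℕ} (hm : Even m) : Nat.gcd (m + 1) 2 = 1 :=
  Nat.Coprime.symm <| hm.add_one.coprime_two_left

lemma gcd_succ_two_of_odd {m : ℕ} (hm : Odd m) : Nat.gcd (m + 1) 2 = 2 :=
  Nat.gcd_eq_right (even_iff_two_dvd.1 hm.add_one)

lemma isUnit_intCast_mul_succ {m b k : ℕ} (hbm : b ∣ m) (hkb : k.Coprime b) :
    IsUnit (((k * (m + 1) : ℕ) : ℤ) : ZMod b) := by
  have hm : (m : ZMod b) = 0 := (ZMod.natCast_eq_zero_iff m b).2 hbm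
  rw [Int.cast_natCast, Nat.cast_mul, Nat.cast_succ, hm, zero_add, mul_one]
  exact (ZMod.isUnit_iff_coprime k b).2 hkb

lemma exists_int_eq_div_isUnit {m b c k g : ℕ} (hm : m = c * b) (hm0 : m ≠ 0)
    (hck : c * k = 6 * g) (hkb : k.Coprime b) :
    ∃ z : ℤ, (z : ℚ) = 6 * (b : ℚ) * ((m : ℚ) + 1) * (g : ℚ) / m ∧ IsUnit (z : ZMod b) := by
  refine ⟨(k * (m + 1) : ℕ), ?_, isUnit_intCast_mul_succ (hm ▸ dvd_mul_left b c) hkb⟩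
  have hckq : (c : ℚ) * k = 6 * g := by exact_mod_cast hck
  rw [eq_div_iff (by exact_mod_cast hm0), hm]
  push_cast
  linear_combination ((b : ℚ) * (c * b + 1)) * hckq

lemma coprime_twelve_of_prime {p : ℕ} (hp : p.Prime) (hp3 : 3 < p) : Nat.Coprime 12 p := by
  have h2 : Nat.Coprime 2 p := (Nat.coprime_primes Nat.prime_two hp).2 (by omega)
  have h3 : Nat.Coprime 3 p := (Nat.coprime_primes Nat.prime_three hp).2 (by omega)
  exact Nat.Coprime.mul_left (Nat.Coprime.pow_left 2 h2) h3

/-- In each prime-primary case with the corresponding b̃_m, the charge-3 index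
    ν̃₂'(m,3) = 6·b̃_m·(m+1)·gcd(m+1,2)/m is an integer which is a unit
    modulo b̃_m. -/
theorem stmt_15 (m bm : ℕ)
    (h : (∃ ν : ℕ, 1 ≤ ν ∧ m = 2 ^ ν ∧ bm = m / 2) ∨
         (∃ ν : ℕ, 1 ≤ ν ∧ m = 3 ^ ν ∧ bm = m / 3) ∨
         (∃ p ν : ℕ, p.Prime ∧ 3 < p ∧ 1 ≤ ν ∧ m = p ^ ν ∧ bm = m)) :
    ∃ z : ℤ,
      (z : ℚ) = 6 * (bm : ℚ) * ((m : ℚ) + 1) * (Nat.gcd (m + 1) 2 : ℚ) / m ∧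
      IsUnit ((z : ZMod bm)) := by
  rcases h with ⟨ν, hν, rfl, rfl⟩ | ⟨ν, hν, rfl, rfl⟩ | ⟨p, ν, hp, hp3, -, rfl, rfl⟩
  · obtain ⟨k, rfl⟩ : ∃ k, ν = k + 1 := ⟨ν - 1, by omega⟩
    have hb : 2 ^ (k + 1) / 2 = 2 ^ k := by rw [pow_succ, Nat.mul_div_cancel _ two_pos]
    have hg := gcd_succ_two_of_even (Nat.even_pow.2 ⟨even_two, k.succ_ne_zero⟩)
    rw [hb]
    exact exists_int_eq_div_isUnit (c := 2) (k := 3) (pow_succ' 2 k) (by positivity)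
      (by rw [hg]) (Nat.Coprime.pow_right k (by decide))
  · obtain ⟨k, rfl⟩ : ∃ k, ν = k + 1 := ⟨ν - 1, by omega⟩
    have hb : 3 ^ (k + 1) / 3 = 3 ^ k := by rw [pow_succ, Nat.mul_div_cancel _ three_pos]
    have hg := gcd_succ_two_of_odd (Odd.pow (n := k + 1) (by decide : Odd 3))
    rw [hb]
    exact exists_int_eq_div_isUnit (c := 3) (k := 4) (pow_succ' 3 k) (by positivity)
      (by rw [hg]) (Nat.Coprime.pow_right k (by decide))
  · have hg := gcd_succ_two_of_odd (Odd.pow (hp.odd_of_ne_two (by omega)) (n := ν))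
    exact exists_int_eq_div_isUnit (c := 1) (k := 12) (one_mul _).symm
      (pow_ne_zero ν hp.ne_zero) (by rw [hg]) ((coprime_twelve_of_prime hp hp3).pow_right ν)
end
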